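/- arXiv:1911.05767 — 3 statements merged into one kernel-verified Lean document; each statement's English description precedes it below -/
import Mathlib

section
/- With F, Λ as in the generalized eigenvalue decomposition Fᴴ(I + C^{1/2}G_R C^{1/2})F = I and Fᴴ(I + C^{1/2}G_D C^{1/2})F = Λ (Λ diagonal with entries λᵢ), let F₁ consist of the columns of F with λᵢ > 1, let Λ̄ = diag{max(λᵢ,1)}, and set C_v★ = C^{1/2} F₁ F₁⁺ C^{1/2}. Then det(I + G_D C_v★) = det(F₁ᴴF₁)⁻¹ · det(Λ̄). -/
open Matrix
open scoped ComplexOrder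

/-- Identity (27): with `Fᴴ(I + S G_R S)F = I`, `Fᴴ(I + S G_D S)F = Λ = diag(d)`,
`F₁` the columns of `F` with `dᵢ > 1`, `Λ̄ = diag(max(dᵢ,1))`, and
`C_v★ = S (F₁ F₁⁺) S`, it holds that
`det(I + G_D C_v★) = det(F₁ᴴF₁)⁻¹ · det(Λ̄)`. -/
theorem stmt_4 (n : ℕ) (C S GR GD : Matrix (Fin n) (Fin n) ℂ)
    (hC : C.PosDef) (hS : S.PosSemidef) (hSC : S * S = C)
    (hGR : GR.PosSemidef) (hGD : GD.PosSemidef)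
    (F : Matrix (Fin n) (Fin n) ℂ) (hF : IsUnit F) (d : Fin n → ℝ)
    (hI : Fᴴ * (1 + S * GR * S) * F = 1)
    (hΛ : Fᴴ * (1 + S * GD * S) * F = Matrix.diagonal (fun i => (d i : ℂ))) :
    let F₁ : Matrix (Fin n) {i : Fin n // 1 < d i} ℂ := F.submatrix id Subtype.val
    let Cvstar := S * (F₁ * (F₁ᴴ * F₁)⁻¹ * F₁ᴴ) * S
    (1 + GD * Cvstar).det
      = (F₁ᴴ * F₁).det⁻¹ * (Matrix.diagonal (fun i => ((max (d i) 1 : ℝ) : ℂ))).det := by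
  classical
  intro F₁ Cvstar
  have hdF : IsUnit F.det := (Matrix.isUnit_iff_isUnit_det F).mp hF
  have hdFH : IsUnit Fᴴ.det := by
    rw [Matrix.det_conjTranspose]; exact hdF.star
  set E : Matrix (Fin n) {i : Fin n // 1 < d i} ℂ :=
    Matrix.of fun i j => if i = (j : Fin n) then 1 else 0 with hEdef
  set Λd : Matrix (Fin n) (Fin n) ℂ := Matrix.diagonal (fun i => (d i : ℂ)) with hΛdd
  set ΛJ : Matrix {i : Fin n // 1 < d i} {i : Fin n // 1 < d i} ℂ :=
    Matrix.diagonal (fun j => (d (j : Fin n) : ℂ)) with hΛJ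
  have hF₁ : F₁ = F * E := by
    show F.submatrix id Subtype.val = F * E
    ext i j
    simp [hEdef, Matrix.mul_apply]
  have hEE : Eᴴ * E = 1 := by
    ext j k
    have : ((Eᴴ * E) j k) = ∑ i, (if i = (j : Fin n) then 1 else 0) *
        (if i = (k : Fin n) then (1:ℂ) else 0) := by
      simp [hEdef, Matrix.mul_apply, Matrix.conjTranspose_apply, apply_ite]
    rw [this]
    rcases eq_or_ne j k with h | h
    · subst h; simp [Matrix.one_apply]
    · have hne : (j : Fin n) ≠ (k : Fin n) := fun hh => h (Subtype.ext hh)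
      rw [Finset.sum_eq_zero, Matrix.one_apply_ne h]
      intro i _
      rcases eq_or_ne i (j : Fin n) with hi | hi
      · subst hi; simp [hne]
      · simp [hi]
  have hEΛ : Eᴴ * Λd = ΛJ * Eᴴ := by
    ext j k
    rw [hΛdd, hΛJ, Matrix.mul_diagonal, Matrix.diagonal_mul]
    simp only [hEdef, Matrix.conjTranspose_apply, Matrix.of_apply]
    rcases eq_or_ne k ((j : Fin n)) with h | h <;> simp [h]
  have hEinj : ∀ v : {i : Fin n // 1 < d i} → ℂ, E *ᵥ v = 0 → v = 0 := by
    intro v hv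
    funext j
    have h1 : (E *ᵥ v) (j : Fin n) = v j := by
      simp [Matrix.mulVec, dotProduct, hEdef, Subtype.coe_inj]
    rw [hv] at h1
    exact h1.symm
  have hA2 : Eᴴ * (Fᴴ * F) * E = F₁ᴴ * F₁ := by
    rw [hF₁, Matrix.conjTranspose_mul]
    simp only [Matrix.mul_assoc]
  have hdA : IsUnit (F₁ᴴ * F₁).det := by
    rw [← Matrix.isUnit_iff_isUnit_det, ← Matrix.mulVec_injective_iff_isUnit]
    intro x y hxy
    rw [← sub_eq_zero]
    have h0 : (F₁ᴴ * F₁) *ᵥ (x - y) = 0 := by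
      rw [Matrix.mulVec_sub, hxy, sub_self]
    set v := x - y with hvdef
    have h2 : star (F₁ *ᵥ v) ⬝ᵥ (F₁ *ᵥ v) = 0 := by
      rw [Matrix.star_mulVec, ← Matrix.dotProduct_mulVec, Matrix.mulVec_mulVec, h0,
        dotProduct_zero]
    have h3 : F₁ *ᵥ v = 0 := dotProduct_star_self_eq_zero.mp h2
    rw [hF₁, ← Matrix.mulVec_mulVec] at h3
    have hFi : Function.Injective F.mulVec := Matrix.mulVec_injective_iff_isUnit.mpr hF
    have h4 : E *ᵥ v = 0 := by
      apply hFi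
      simpa using h3
    exact hEinj v h4
  -- value of S * GD * S
  have hNval : (1 : Matrix (Fin n) (Fin n) ℂ) + S * GD * S = Fᴴ⁻¹ * (Λd * F⁻¹) := by
    have h1 : Fᴴ * ((1 + S * GD * S) * F) = Λd := by rw [← Matrix.mul_assoc, hΛ]
    have h2 : (1 + S * GD * S) * F = Fᴴ⁻¹ * Λd := by
      rw [← h1, Matrix.nonsing_inv_mul_cancel_left _ _ hdFH]
    have h3 := congrArg (fun M => M * F⁻¹) h2
    simpa [Matrix.mul_nonsing_inv_cancel_right _ _ hdF, Matrix.mul_assoc] using h3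
  set Q : Matrix (Fin n) (Fin n) ℂ := F₁ * (F₁ᴴ * F₁)⁻¹ * F₁ᴴ with hQdef
  have step1 : (1 + GD * Cvstar).det = (1 + Q * (S * GD * S)).det := by
    show (1 + GD * (S * Q * S)).det = _
    rw [Matrix.det_one_add_mul_comm GD]
    rw [show (S * Q * S) * GD = (S * Q) * (S * GD) by simp [Matrix.mul_assoc]]
    rw [Matrix.det_one_add_mul_comm]
    rw [show (S * GD) * (S * Q) = (S * GD * S) * Q by simp [Matrix.mul_assoc]]
    rw [Matrix.det_one_add_mul_comm]
  have step2 : (1 : Matrix (Fin n) (Fin n) ℂ) + Q * (S * GD * S)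
      = 1 - Q + Q * (Fᴴ⁻¹ * (Λd * F⁻¹)) := by
    have h : S * GD * S = Fᴴ⁻¹ * (Λd * F⁻¹) - 1 := by rw [← hNval]; abel
    rw [h, Matrix.mul_sub, Matrix.mul_one]
    abel
  have cancelFH : ∀ (B : Matrix (Fin n) (Fin n) ℂ), Fᴴ * (Fᴴ⁻¹ * B) = B := fun B =>
    Matrix.mul_nonsing_inv_cancel_left _ B hdFH
  have hQ : Q = F * (E * ((F₁ᴴ * F₁)⁻¹ * (Eᴴ * Fᴴ))) := by
    rw [hQdef, hF₁, Matrix.conjTranspose_mul]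
    simp only [Matrix.mul_assoc]
  have hXF : Fᴴ * ((1 - Q + Q * (Fᴴ⁻¹ * (Λd * F⁻¹))) * F)
      = (Fᴴ * F) * (1 + E * ((F₁ᴴ * F₁)⁻¹ * (ΛJ * Eᴴ)
          - (F₁ᴴ * F₁)⁻¹ * (Eᴴ * (Fᴴ * F)))) := by
    rw [hQ]
    simp only [Matrix.mul_add, Matrix.add_mul, Matrix.mul_sub, Matrix.sub_mul, Matrix.mul_one,
      Matrix.one_mul, Matrix.mul_assoc]
    rw [Matrix.nonsing_inv_mul F hdF]
    simp only [Matrix.mul_one, cancelFH]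
    rw [hEΛ]
    try simp only [Matrix.mul_assoc]
    abel
  have hYdet : (1 + E * ((F₁ᴴ * F₁)⁻¹ * (ΛJ * Eᴴ)
      - (F₁ᴴ * F₁)⁻¹ * (Eᴴ * (Fᴴ * F)))).det = (F₁ᴴ * F₁).det⁻¹ * ΛJ.det := by
    rw [Matrix.det_one_add_mul_comm]
    have h : ((F₁ᴴ * F₁)⁻¹ * (ΛJ * Eᴴ) - (F₁ᴴ * F₁)⁻¹ * (Eᴴ * (Fᴴ * F))) * E
        = (F₁ᴴ * F₁)⁻¹ * ΛJ - 1 := by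
      rw [Matrix.sub_mul]
      congr 1
      · rw [Matrix.mul_assoc, Matrix.mul_assoc, hEE, Matrix.mul_one]
      · rw [Matrix.mul_assoc, show (Eᴴ * (Fᴴ * F)) * E = F₁ᴴ * F₁ from by
          rw [← hA2], Matrix.nonsing_inv_mul _ hdA]
    rw [h, show (1 : Matrix {i : Fin n // 1 < d i} {i : Fin n // 1 < d i} ℂ)
      + ((F₁ᴴ * F₁)⁻¹ * ΛJ - 1) = (F₁ᴴ * F₁)⁻¹ * ΛJ from by abel]
    rw [Matrix.det_mul, Matrix.det_nonsing_inv, Ring.inverse_eq_inv']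
  have hXdet : (1 - Q + Q * (Fᴴ⁻¹ * (Λd * F⁻¹))).det
      = (F₁ᴴ * F₁).det⁻¹ * ΛJ.det := by
    have h1 : Fᴴ.det * ((1 - Q + Q * (Fᴴ⁻¹ * (Λd * F⁻¹))).det * F.det)
        = Fᴴ.det * (((F₁ᴴ * F₁).det⁻¹ * ΛJ.det) * F.det) := by
      calc Fᴴ.det * ((1 - Q + Q * (Fᴴ⁻¹ * (Λd * F⁻¹))).det * F.det)
          = (Fᴴ * ((1 - Q + Q * (Fᴴ⁻¹ * (Λd * F⁻¹))) * F)).det := by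
            rw [Matrix.det_mul, Matrix.det_mul]
        _ = ((Fᴴ * F) * (1 + E * ((F₁ᴴ * F₁)⁻¹ * (ΛJ * Eᴴ)
              - (F₁ᴴ * F₁)⁻¹ * (Eᴴ * (Fᴴ * F))))).det := by rw [hXF]
        _ = Fᴴ.det * (((F₁ᴴ * F₁).det⁻¹ * ΛJ.det) * F.det) := by
            rw [Matrix.det_mul, Matrix.det_mul, hYdet]; ring
    have h2 := mul_left_cancel₀ hdFH.ne_zero h1
    exact mul_right_cancel₀ hdF.ne_zero h2
  have hΛfin : ΛJ.det = (Matrix.diagonal (fun i => ((max (d i) 1 : ℝ) : ℂ))).det := by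
    rw [hΛJ, Matrix.det_diagonal, Matrix.det_diagonal]
    rw [← Finset.prod_subtype (Finset.univ.filter fun i => 1 < d i)
      (p := fun i => 1 < d i) (by simp) (fun i => (d i : ℂ))]
    rw [Finset.prod_filter]
    refine Finset.prod_congr rfl fun i _ => ?_
    rcases lt_or_ge 1 (d i) with h | h
    · rw [if_pos h, max_eq_left h.le]
    · rw [if_neg (not_lt.mpr h), max_eq_right h]
      norm_cast
  rw [step1, step2, hXdet, hΛfin]
end

section
/- With the same setup, det(I + G_R C_v★) = det(F₁ᴴF₁)⁻¹, where C_v★ = C^{1/2} F₁ F₁⁺ C^{1/2}. -/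
/-!
Restricting `Fᴴ (1 + S G_R S) F = 1` to the columns `F₁` gives `F₁ᴴ (1 + S G_R S) F₁ = 1`,
i.e. `F₁ᴴ S G_R S F₁ = 1 - A` with `A = F₁ᴴ F₁`, which is invertible because `F₁` has
independent columns. Sylvester's determinant identity moves the projection
`F₁ A⁻¹ F₁ᴴ` around: `det(1 + G_R S F₁ A⁻¹ F₁ᴴ S) = det(1 + A⁻¹ F₁ᴴ S G_R S F₁)
= det(1 + A⁻¹ (1 - A)) = det A⁻¹`.
-/

open Matrix
open scoped ComplexOrder

namespace Matrix

theorem conjTranspose_submatrix_mul_mul_submatrix {m n k α : Type*} [Fintype m] [Fintype n]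
    [CommSemiring α] [StarRing α] (A : Matrix m n α) (M : Matrix m m α) (v : k → n) :
    (A.submatrix id v)ᴴ * M * A.submatrix id v = (Aᴴ * M * A).submatrix v v := by
  rw [submatrix_mul _ _ v id v Function.bijective_id,
    submatrix_mul _ _ v id id Function.bijective_id]
  rfl

section Field

variable {m k K : Type*} [Fintype m] [DecidableEq m] [Fintype k] [Field K]

theorem mulVec_injective_submatrix_of_isUnit {A : Matrix m m K} (hA : IsUnit A)
    {v : k → m} (hv : Function.Injective v) : Function.Injective (A.submatrix id v).mulVec := by
  rw [mulVec_injective_iff]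
  exact (linearIndependent_cols_of_isUnit hA).comp v hv

theorem isUnit_conjTranspose_mul_self_submatrix [DecidableEq k] [PartialOrder K] [StarRing K] [StarOrderedRing K]
    {A : Matrix m m K} (hA : IsUnit A) {v : k → m} (hv : Function.Injective v) :
    IsUnit ((A.submatrix id v)ᴴ * A.submatrix id v) :=
  (PosDef.conjTranspose_mul_self _ (mulVec_injective_submatrix_of_isUnit hA hv)).isUnit

theorem det_one_add_mul_projection [DecidableEq k] [StarRing K] (P : Matrix m k K) (S T G : Matrix m m K)
    (hP : Pᴴ * (1 + T * G * S) * P = 1) (hPP : IsUnit (Pᴴ * P)) :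
    (1 + G * (S * (P * (Pᴴ * P)⁻¹ * Pᴴ) * T)).det = (Pᴴ * P).det⁻¹ := by
  set A := Pᴴ * P
  have hcompress : Pᴴ * (T * G * S) * P = 1 - A := by
    rw [Matrix.mul_add, Matrix.mul_one, Matrix.add_mul] at hP
    exact eq_sub_of_add_eq' hP
  have hAinv : A⁻¹ * A = 1 := nonsing_inv_mul A ((isUnit_iff_isUnit_det A).mp hPP)
  calc (1 + G * (S * (P * A⁻¹ * Pᴴ) * T)).det
      = (1 + (G * S * P) * (A⁻¹ * (Pᴴ * T))).det := by simp only [Matrix.mul_assoc]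
    _ = (1 + A⁻¹ * (Pᴴ * (T * G * S) * P)).det := by
        rw [det_one_add_mul_comm]
        simp only [Matrix.mul_assoc]
    _ = A⁻¹.det := by
        rw [hcompress, Matrix.mul_sub, Matrix.mul_one, hAinv, add_sub_cancel]
    _ = A.det⁻¹ := by rw [det_nonsing_inv, Ring.inverse_eq_inv']

end Field

end Matrix

theorem stmt_5_general (n : ℕ) (S GR : Matrix (Fin n) (Fin n) ℂ)
    (F : Matrix (Fin n) (Fin n) ℂ) (hF : IsUnit F) (d : Fin n → ℝ)
    (hI : Fᴴ * (1 + S * GR * S) * F = 1) :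
    let F₁ : Matrix (Fin n) {i : Fin n // 1 < d i} ℂ := F.submatrix id Subtype.val
    let Cvstar := S * (F₁ * (F₁ᴴ * F₁)⁻¹ * F₁ᴴ) * S
    (1 + GR * Cvstar).det = (F₁ᴴ * F₁).det⁻¹ := by
  intro F₁ Cvstar
  have hv : Function.Injective (Subtype.val : {i // 1 < d i} → Fin n) := Subtype.val_injective
  have hP : F₁ᴴ * (1 + S * GR * S) * F₁ = 1 := by
    rw [conjTranspose_submatrix_mul_mul_submatrix, hI, submatrix_one _ hv]
  exact det_one_add_mul_projection F₁ S S GR hP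
    (isUnit_conjTranspose_mul_self_submatrix hF hv)

/-- Identity (28): with `Fᴴ(I + S G_R S)F = I`, `Fᴴ(I + S G_D S)F = diag(d)`,
`F₁` the columns of `F` with `dᵢ > 1`, and `C_v★ = S (F₁ F₁⁺) S`, it holds that
`det(I + G_R C_v★) = det(F₁ᴴF₁)⁻¹`. -/
theorem stmt_5 (n : ℕ) (C S GR GD : Matrix (Fin n) (Fin n) ℂ)
    (hC : C.PosDef) (hS : S.PosSemidef) (hSC : S * S = C)
    (hGR : GR.PosSemidef) (hGD : GD.PosSemidef)
    (F : Matrix (Fin n) (Fin n) ℂ) (hF : IsUnit F) (d : Fin n → ℝ)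
    (hI : Fᴴ * (1 + S * GR * S) * F = 1)
    (hΛ : Fᴴ * (1 + S * GD * S) * F = Matrix.diagonal (fun i => (d i : ℂ))) :
    let F₁ : Matrix (Fin n) {i : Fin n // 1 < d i} ℂ := F.submatrix id Subtype.val
    let Cvstar := S * (F₁ * (F₁ᴴ * F₁)⁻¹ * F₁ᴴ) * S
    (1 + GR * Cvstar).det = (F₁ᴴ * F₁).det⁻¹ :=
  stmt_5_general n S GR F hF d hI
end

section
/- If A and B are Hermitian positive semidefinite n×n matrices with A ⪰ B, then det(I + A·Q) ≥ det(I + B·Q) for every Hermitian positive semidefinite Q. -/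
/-!
Writing `S = √Q`, Sylvester's identity gives `det (1 + X Q) = det (1 + S X S)`, and conjugation
by `S` preserves the Loewner order, so `1 + S B S ≤ 1 + S A S`. It remains that the determinant is
monotone on positive semidefinite matrices: if `0 < P ≤ P'` and `T = √P`, then
`P' = T (1 + M) T` with `M = T⁻¹ (P' - P) T⁻¹ ⪰ 0`, hence
`det P' = det P · det (1 + M) ≥ det P`, because every eigenvalue of `1 + M` is at least `1`.
-/

open Matrix
open scoped ComplexOrder MatrixOrder

namespace Matrix

variable {𝕜 n : Type*} [RCLike 𝕜] [Fintype n] [DecidableEq n]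

theorem IsHermitian.det_cfc {A : Matrix n n 𝕜} (hA : A.IsHermitian) (f : ℝ → ℝ) :
    (cfc f A).det = ∏ i, (f (hA.eigenvalues i) : 𝕜) := by
  rw [hA.cfc_eq, IsHermitian.cfc]
  simp [-Unitary.conjStarAlgAut_apply]

theorem PosSemidef.one_le_det_one_add {M : Matrix n n 𝕜} (hM : M.PosSemidef) :
    1 ≤ (1 + M).det := by
  have hcfc : 1 + M = cfc (fun x : ℝ ↦ 1 + x) M := by
    rw [cfc_add .., cfc_const_one .., cfc_id' ..]
  rw [hcfc, hM.isHermitian.det_cfc]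
  refine Finset.one_le_prod fun i _ ↦ ?_
  rw [RCLike.ofReal_add, RCLike.ofReal_one]
  exact le_add_of_nonneg_right (RCLike.ofReal_nonneg.mpr (hM.eigenvalues_nonneg i))

theorem PosDef.det_le_det {A B : Matrix n n 𝕜} (hA : A.PosDef) (hAB : A ≤ B) :
    A.det ≤ B.det := by
  set T := CFC.sqrt A
  have hTT : T * T = A := CFC.sqrt_mul_sqrt_self A hA.posSemidef.nonneg
  have hTunit : IsUnit T := isUnit_mul_self_iff.mp (hTT ▸ hA.isUnit)
  have hTinv : T⁻¹.IsHermitian := (nonneg_iff_posSemidef.mp (CFC.sqrt_nonneg A)).isHermitian.inv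
  have hdetT : IsUnit T.det := (isUnit_iff_isUnit_det T).mp hTunit
  set M := T⁻¹ * (B - A) * T⁻¹
  have hM : M.PosSemidef := by
    simpa only [hTinv.eq] using PosSemidef.conjTranspose_mul_mul_same hAB T⁻¹
  have hB : T * (1 + M) * T = B := by
    rw [mul_add, add_mul, mul_one, hTT, ← mul_assoc, ← mul_assoc, mul_nonsing_inv _ hdetT,
      one_mul, mul_assoc, nonsing_inv_mul _ hdetT, mul_one, add_sub_cancel]
  calc A.det = A.det * 1 := (mul_one _).symm
    _ ≤ A.det * (1 + M).det :=
      mul_le_mul_of_nonneg_left hM.one_le_det_one_add hA.posSemidef.det_nonneg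
    _ = (T * (1 + M) * T).det := by rw [det_mul_right_comm, det_mul, hTT]
    _ = B.det := by rw [hB]

theorem PosSemidef.det_le_det {A B : Matrix n n 𝕜} (hA : A.PosSemidef) (hAB : A ≤ B) :
    A.det ≤ B.det := by
  by_cases hA' : A.PosDef
  · exact hA'.det_le_det hAB
  rw [hA.posDef_iff_det_ne_zero, not_not] at hA'
  rw [hA']
  exact (nonneg_iff_posSemidef.mp (hA.nonneg.trans hAB)).det_nonneg

end Matrix

theorem stmt_7_general (n : ℕ) (A B Q : Matrix (Fin n) (Fin n) ℂ)
    (hB : B.PosSemidef) (hAB : (A - B).PosSemidef)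
    (hQ : Q.PosSemidef) :
    (1 + A * Q).det.im = 0 ∧ (1 + B * Q).det.im = 0 ∧
    (1 + B * Q).det.re ≤ (1 + A * Q).det.re := by
  set S := CFC.sqrt Q
  have hSS : S * S = Q := CFC.sqrt_mul_sqrt_self Q hQ.nonneg
  have hS : IsSelfAdjoint S := (CFC.sqrt_nonneg Q).isSelfAdjoint
  have hdet (X : Matrix (Fin n) (Fin n) ℂ) : (1 + X * Q).det = (1 + S * X * S).det := by
    rw [← hSS, ← mul_assoc, det_one_add_mul_comm, ← mul_assoc]
  have hBA : 1 + S * B * S ≤ 1 + S * A * S :=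
    add_le_add_right (hS.conjugate_le_conjugate (le_iff.mpr hAB)) 1
  have hB' : (1 + S * B * S).PosSemidef := by
    simpa only [hS.isHermitian.eq] using PosSemidef.one.add (hB.conjTranspose_mul_mul_same S)
  obtain ⟨hre, him⟩ := Complex.le_def.mp (hB'.det_le_det hBA)
  have him0 : (1 + S * B * S).det.im = 0 := (Complex.nonneg_iff.mp hB'.det_nonneg).2.symm
  rw [hdet A, hdet B]
  exact ⟨him ▸ him0, him0, hre⟩

/-- If `A ⪰ B ⪰ 0` are Hermitian PSD, then `det(I + A·Q) ≥ det(I + B·Q)` for every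
Hermitian PSD `Q` (both determinants being real). -/
theorem stmt_7 (n : ℕ) (A B Q : Matrix (Fin n) (Fin n) ℂ)
    (hA : A.PosSemidef) (hB : B.PosSemidef) (hAB : (A - B).PosSemidef)
    (hQ : Q.PosSemidef) :
    (1 + A * Q).det.im = 0 ∧ (1 + B * Q).det.im = 0 ∧
    (1 + B * Q).det.re ≤ (1 + A * Q).det.re :=
  stmt_7_general n A B Q hB hAB hQ
end
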